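/- Let g, r, d be positive integers with r ≥ 2, d ≤ g - 1, g + 2 = (r+1)(g - d + r), and suppose there exist positive integers s, e with s > r, e ≤ g - 1, e ≠ d, e ≠ 2g - 2 - d, and g + 2 = (s+1)(g - e + s). Then g - d + r ≥ 6. -/
import Mathlib


theorem stmt_2 (g r d : ℤ)
    (hg : 0 < g) (hr0 : 0 < r) (hd0 : 0 < d)
    (hr : 2 ≤ r) (hd : d ≤ g - 1)
    (h1 : g + 2 = (r + 1) * (g - d + r))
    (h2 : ∃ s e : ℤ, 0 < s ∧ 0 < e ∧ r < s ∧ e ≤ g - 1 ∧ e ≠ d ∧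
      e ≠ 2 * g - 2 - d ∧ g + 2 = (s + 1) * (g - e + s)) :
    g - d + r ≥ 6 := by
  obtain ⟨s, e, hs0, he0, hrs, he, _, _, h2⟩ := h2
  set a := g - d + r with ha
  set b := g - e + s with hb
  have hbs : s + 1 ≤ b := by omega
  have heq : (r + 1) * a = (s + 1) * b := by omega
  have hba : b < a := by nlinarith
  by_contra h
  push_neg at h
  have hs3 : s = 3 := by omega
  have hb4 : b = 4 := by omega
  have hr2 : r = 2 := by omega
  rw [hs3, hb4] at h2
  rw [hr2] at h1
  omega
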